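/- Let G=(V,E) be a finite simple graph with n = |V| and m = |E|, let h ≥ 2 be an even integer, and let Q ⊆ V be a clique of G with |Q| = h inducing the complete subgraph K_h. Then the even-clique inequality ∑_{v∈V(K_h)} x_v + ∑_{e∈E(K_h)} y_e ≤ h/2 is valid for the Total Matching Polytope P_T(G), and it is facet-defining: there exist n+m affinely independent characteristic vectors of total matchings of G satisfying it with equality. -/

import Mathlib

open Finset

variable {V : Type*}

/-- A total matching of a graph `G`: a set `S` of vertices and a set `M` of edges
such that the elements of `S ∪ M` are pairwise non-adjacent. -/
def IsTotalMatching (G : SimpleGraph V) (S : Finset V) (M : Finset (Sym2 V)) : Prop :=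
  (↑M ⊆ G.edgeSet) ∧
  (∀ v ∈ S, ∀ w ∈ S, ¬ G.Adj v w) ∧
  (∀ e ∈ M, ∀ f ∈ M, e ≠ f → ∀ v : V, ¬(v ∈ e ∧ v ∈ f)) ∧
  (∀ v ∈ S, ∀ e ∈ M, v ∉ e)

/-- Characteristic vector of a total matching, with vertex coordinates and edge coordinates. -/
def charVec [DecidableEq V] (S : Finset V) (M : Finset (Sym2 V)) :
    (V → ℝ) × (Sym2 V → ℝ) :=
  (fun v => if v ∈ S then 1 else 0, fun e => if e ∈ M then 1 else 0)

/-- The total matching polytope: convex hull of characteristic vectors of total matchings. -/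
def totalMatchingPolytope [DecidableEq V] (G : SimpleGraph V) :
    Set ((V → ℝ) × (Sym2 V → ℝ)) :=
  convexHull ℝ {p | ∃ S M, IsTotalMatching G S M ∧ p = charVec S M}

/-!
Validity: a total matching meets the clique `Q` in at most one vertex and in pairwise disjoint
edges, each covering two clique vertices not in the matching, so `x(Q) + 2 y(E(Q)) ≤ h`; since `h`
is even and `x(Q) ≤ 1`, this gives `x(Q) + y(E(Q)) ≤ h / 2`.

Facet: linearly independent points are affinely independent, so it suffices that the
characteristic vectors of the tight total matchings span a space of dimension `n + m`, i.e. that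
their span contains the unit vector of every vertex and every edge. Adding a vertex or an edge
outside `K_h` to a suitable tight total matching keeps it tight, which gives the unit vectors
outside `K_h`. Inside `K_h`, the tight total matchings `{a} ∪ M`, `{c} ∪ M` and `M ∪ {ac}`
(with `M` a perfect matching of `Q \ {a, c}`) give all differences of unit vectors of clique
elements; summing `e_f - e_a` over the `h / 2` edges `f` of a perfect matching `P` of `Q` and
comparing with `χ(P)` yields `e_a` itself.
-/

theorem exists_finset_subset_card_eq_linearIndependent {K ι M : Type*} [DivisionRing K]
    [AddCommGroup M] [Module K M] {s : Set ι} (hs : s.Finite) (f : ι → M) {n : ℕ}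
    (hn : n ≤ Module.finrank K (Submodule.span K (f '' s))) :
    ∃ F : Finset ι, ↑F ⊆ s ∧ F.card = n ∧ LinearIndependent K (fun i : F => f i) := by
  obtain ⟨κ, a, ha, hspan, hli⟩ := exists_linearIndependent' K (fun i : s => f i)
  have : Finite s := hs.to_subtype
  have : Finite κ := Finite.of_injective a ha
  have : Fintype κ := Fintype.ofFinite κ
  obtain ⟨t, -, ht⟩ := exists_subset_card_eq (s := (univ : Finset κ)) (n := n) <| by
    rwa [card_univ, ← finrank_span_eq_card hli, hspan, ← Set.image_eq_range]
  let e : κ ↪ ι := ⟨fun k => a k, Subtype.val_injective.comp ha⟩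
  choose g hg using fun i : t.map e => mem_map.1 i.2
  have hg_inj : Function.Injective g := fun i j hij =>
    Subtype.ext ((hg i).2.symm.trans (hij ▸ (hg j).2))
  refine ⟨t.map e, ?_, by rw [card_map, ht], ?_⟩
  · intro i hi
    obtain ⟨k, -, rfl⟩ := mem_map.1 hi
    exact (a k).2
  · convert hli.comp g hg_inj with i
    exact congrArg f (hg i).2.symm

theorem isTotalMatching_empty {G : SimpleGraph V} : IsTotalMatching G ∅ ∅ := by
  simp [IsTotalMatching]

namespace IsTotalMatching

variable {G : SimpleGraph V} {S : Finset V} {M : Finset (Sym2 V)}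

theorem insert_edge [DecidableEq V] (hT : IsTotalMatching G S M) {e : Sym2 V}
    (he : e ∈ G.edgeSet) (heM : ∀ f ∈ M, ∀ v ∈ e, v ∉ f) (heS : ∀ v ∈ S, v ∉ e) :
    IsTotalMatching G S (insert e M) := by
  obtain ⟨hE, hS, hM, hSM⟩ := hT
  refine ⟨?_, hS, ?_, ?_⟩
  · rw [coe_insert]
    exact Set.insert_subset he hE
  · simp only [mem_insert]
    rintro f (rfl | hf) g (rfl | hg) hfg v ⟨hvf, hvg⟩
    · exact hfg rfl
    · exact heM g hg v hvf hvg
    · exact heM f hf v hvg hvf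
    · exact hM f hf g hg hfg v ⟨hvf, hvg⟩
  · simp only [mem_insert]
    rintro v hv f (rfl | hf)
    · exact heS v hv
    · exact hSM v hv f hf

theorem insert_vertex [DecidableEq V] (hT : IsTotalMatching G S M) {v : V}
    (hvS : ∀ w ∈ S, ¬ G.Adj v w) (hvM : ∀ e ∈ M, v ∉ e) :
    IsTotalMatching G (insert v S) M := by
  obtain ⟨hE, hS, hM, hSM⟩ := hT
  refine ⟨hE, ?_, hM, ?_⟩
  · simp only [mem_insert]
    rintro a (rfl | ha) b (rfl | hb)
    · exact G.irrefl
    · exact hvS b hb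
    · exact fun h => hvS a ha h.symm
    · exact hS a ha b hb
  · simp only [mem_insert]
    rintro a (rfl | ha)
    · exact hvM
    · exact hSM a ha

theorem card_inter_le_one [DecidableEq V] (hT : IsTotalMatching G S M) {Q : Finset V}
    (hQ : G.IsClique (Q : Set V)) :
    #(Q ∩ S) ≤ 1 := by
  refine card_le_one.2 fun a ha b hb => by_contra fun hab => ?_
  exact hT.2.1 a (mem_inter.1 ha).2 b (mem_inter.1 hb).2
    (hQ (mem_inter.1 ha).1 (mem_inter.1 hb).1 hab)

end IsTotalMatching

/-- A total matching without vertices is a matching; with all its edges inside `R` and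
`2 * #M = #R`, it covers `R`. -/
def IsPerfectMatchingOn (G : SimpleGraph V) (R : Finset V) (M : Finset (Sym2 V)) : Prop :=
  IsTotalMatching G ∅ M ∧ (∀ e ∈ M, ∀ v ∈ e, v ∈ R) ∧ 2 * M.card = R.card

theorem IsPerfectMatchingOn.insert_edge [DecidableEq V] {G : SimpleGraph V} {R : Finset V}
    {M : Finset (Sym2 V)} (hM : IsPerfectMatchingOn G R M) {a c : V} (hac : G.Adj a c)
    (ha : a ∉ R) (hc : c ∉ R) :
    IsPerfectMatchingOn G (insert a (insert c R)) (insert s(a, c) M) := by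
  obtain ⟨hT, hMR, hcard⟩ := hM
  have hacR : ∀ v ∈ s(a, c), v ∉ R := by
    simp only [Sym2.mem_iff]
    rintro v (rfl | rfl) <;> assumption
  have hacM : s(a, c) ∉ M := fun h => ha (hMR _ h a (Sym2.mem_mk_left a c))
  refine ⟨hT.insert_edge hac (fun f hf v hv hvf => hacR v hv (hMR f hf v hvf)) (by simp),
    ?_, ?_⟩
  · simp only [mem_insert]
    rintro e (rfl | he) v hv
    · rcases Sym2.mem_iff.1 hv with rfl | rfl <;> simp
    · exact Or.inr (Or.inr (hMR e he v hv))
  · rw [card_insert_of_notMem hacM, card_insert_of_notMem (by simp [hac.ne, ha]),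
      card_insert_of_notMem hc]
    omega

theorem SimpleGraph.IsClique.exists_isPerfectMatchingOn [DecidableEq V] {G : SimpleGraph V}
    {R : Finset V} (hR : G.IsClique (R : Set V)) (heven : Even R.card) :
    ∃ M, IsPerfectMatchingOn G R M := by
  obtain ⟨n, hn⟩ := heven
  induction n generalizing R with
  | zero =>
    rw [card_eq_zero.1 hn]
    exact ⟨∅, isTotalMatching_empty, by simp, by simp⟩
  | succ n ih =>
    obtain ⟨a, ha⟩ : R.Nonempty := card_pos.1 (by omega)
    obtain ⟨c, hc⟩ : (R.erase a).Nonempty := card_pos.1 (by rw [card_erase_of_mem ha]; omega)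
    have hsub : (((R.erase a).erase c : Finset V) : Set V) ⊆ R :=
      coe_subset.2 ((erase_subset _ _).trans (erase_subset _ _))
    obtain ⟨M, hM⟩ := ih (hR.subset hsub) <| by
      rw [card_erase_of_mem hc, card_erase_of_mem ha]
      omega
    have := hM.insert_edge (hR ha (mem_of_mem_erase hc) (ne_of_mem_erase hc).symm)
      (by simp) (by simp)
    rw [insert_erase hc, insert_erase ha] at this
    exact ⟨_, this⟩

theorem SimpleGraph.IsClique.exists_isPerfectMatchingOn_erase_erase [DecidableEq V]
    {G : SimpleGraph V} {Q : Finset V} (hQ : G.IsClique (Q : Set V)) (heven : Even #Q)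
    {a c : V} (ha : a ∈ Q) (hc : c ∈ Q) (hac : a ≠ c) :
    ∃ M, IsPerfectMatchingOn G ((Q.erase a).erase c) M := by
  have hsub : (((Q.erase a).erase c : Finset V) : Set V) ⊆ Q :=
    coe_subset.2 ((erase_subset _ _).trans (erase_subset _ _))
  refine (hQ.subset hsub).exists_isPerfectMatchingOn ?_
  rw [card_erase_of_mem (mem_erase.2 ⟨hac.symm, hc⟩), card_erase_of_mem ha, Nat.sub_sub]
  exact (Nat.even_sub (one_lt_card.2 ⟨a, ha, c, hc, hac⟩)).2 (by simp [heven])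

section Coordinates

variable [Fintype V] [DecidableEq V]

variable (V) in
noncomputable def coordBasis :
    Module.Basis (V ⊕ Sym2 V) ℝ ((V → ℝ) × (Sym2 V → ℝ)) :=
  (Pi.basisFun ℝ V).prod (Pi.basisFun ℝ (Sym2 V))

theorem charVec_eq_sum (S : Finset V) (M : Finset (Sym2 V)) :
    charVec S M = ∑ v ∈ S, coordBasis V (.inl v) + ∑ e ∈ M, coordBasis V (.inr e) := by
  ext x <;> simp [charVec, coordBasis, Prod.fst_sum, Prod.snd_sum, Finset.sum_apply,
    Pi.single_apply]

theorem charVec_insert_vertex {S : Finset V} {v : V} (hv : v ∉ S) (M : Finset (Sym2 V)) :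
    charVec (insert v S) M = charVec S M + coordBasis V (.inl v) := by
  rw [charVec_eq_sum, charVec_eq_sum, sum_insert hv]
  abel

theorem charVec_insert_edge (S : Finset V) {M : Finset (Sym2 V)} {e : Sym2 V} (he : e ∉ M) :
    charVec S (insert e M) = charVec S M + coordBasis V (.inr e) := by
  rw [charVec_eq_sum, charVec_eq_sum, sum_insert he]
  abel

end Coordinates

section CliqueInequality

variable [Fintype V] [DecidableEq V] (G : SimpleGraph V) [DecidableRel G.Adj]

def cliqueEdges (Q : Finset V) : Finset (Sym2 V) :=
  G.edgeFinset.filter (fun e => ∀ v ∈ e, v ∈ Q)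

variable {G}

theorem mem_cliqueEdges {Q : Finset V} {e : Sym2 V} :
    e ∈ cliqueEdges G Q ↔ e ∈ G.edgeSet ∧ ∀ v ∈ e, v ∈ Q := by
  simp [cliqueEdges]

variable (G)

noncomputable def cliqueFunctional (Q : Finset V) :
    ((V → ℝ) × (Sym2 V → ℝ)) →ₗ[ℝ] ℝ where
  toFun p := ∑ v ∈ Q, p.1 v + ∑ e ∈ cliqueEdges G Q, p.2 e
  map_add' p q := by
    simp only [Prod.fst_add, Prod.snd_add, Pi.add_apply, sum_add_distrib]
    ring
  map_smul' c p := by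
    simp only [Prod.smul_fst, Prod.smul_snd, Pi.smul_apply, smul_eq_mul, ← mul_sum,
      RingHom.id_apply]
    ring

variable {G}

theorem cliqueFunctional_charVec (Q S : Finset V) (M : Finset (Sym2 V)) :
    cliqueFunctional G Q (charVec S M) = #(Q ∩ S) + #(cliqueEdges G Q ∩ M) := by
  simp [cliqueFunctional, charVec]

theorem IsTotalMatching.card_inter_add_two_mul_card_inter_le {S : Finset V}
    {M : Finset (Sym2 V)} (hT : IsTotalMatching G S M) (Q : Finset V) :
    #(Q ∩ S) + 2 * #(cliqueEdges G Q ∩ M) ≤ #Q := by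
  obtain ⟨-, -, hM, hSM⟩ := hT
  set M' := cliqueEdges G Q ∩ M
  have hM' : ∀ e ∈ M', e ∈ G.edgeSet ∧ (∀ v ∈ e, v ∈ Q) ∧ e ∈ M := fun e he =>
    ⟨(mem_cliqueEdges.1 (mem_inter.1 he).1).1, (mem_cliqueEdges.1 (mem_inter.1 he).1).2,
      (mem_inter.1 he).2⟩
  have hcovered : #(M'.biUnion Sym2.toFinset) = 2 * #M' := by
    rw [card_biUnion, sum_congr rfl fun e he => Sym2.card_toFinset_of_not_isDiag e
      (G.not_isDiag_of_mem_edgeSet (hM' e he).1), sum_const, smul_eq_mul, mul_comm]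
    intro e he f hf hef
    simp only [Function.onFun, disjoint_left, Sym2.mem_toFinset]
    exact fun v hve hvf => hM e (hM' e he).2.2 f (hM' f hf).2.2 hef v ⟨hve, hvf⟩
  have hdisj : Disjoint (Q ∩ S) (M'.biUnion Sym2.toFinset) := by
    simp only [disjoint_left, mem_biUnion, Sym2.mem_toFinset, not_exists, not_and]
    exact fun v hv e he hve => hSM v (mem_inter.1 hv).2 e (hM' e he).2.2 hve
  have hsub : Q ∩ S ∪ M'.biUnion Sym2.toFinset ⊆ Q := by
    simp only [union_subset_iff, biUnion_subset_iff_forall_subset]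
    exact ⟨inter_subset_left, fun e he v hv => (hM' e he).2.1 v (Sym2.mem_toFinset.1 hv)⟩
  rw [← hcovered, ← card_union_of_disjoint hdisj]
  exact card_le_card hsub

theorem IsTotalMatching.cliqueFunctional_charVec_le {S : Finset V} {M : Finset (Sym2 V)}
    (hT : IsTotalMatching G S M) {Q : Finset V} (hQ : G.IsClique (Q : Set V))
    (heven : Even #Q) : cliqueFunctional G Q (charVec S M) ≤ #Q / 2 := by
  have hcount := hT.card_inter_add_two_mul_card_inter_le Q
  have hvertex := hT.card_inter_le_one hQ
  obtain ⟨k, hk⟩ := heven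
  rw [cliqueFunctional_charVec, le_div_iff₀ two_pos]
  exact_mod_cast (by omega : (#(Q ∩ S) + #(cliqueEdges G Q ∩ M)) * 2 ≤ #Q)

theorem cliqueFunctional_le_of_mem_totalMatchingPolytope {Q : Finset V}
    (hQ : G.IsClique (Q : Set V)) (heven : Even #Q) {p : (V → ℝ) × (Sym2 V → ℝ)}
    (hp : p ∈ totalMatchingPolytope G) : cliqueFunctional G Q p ≤ #Q / 2 := by
  refine convexHull_min ?_ (convex_halfSpace_le (cliqueFunctional G Q).isLinear _) hp
  rintro _ ⟨S, M, hT, rfl⟩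
  exact hT.cliqueFunctional_charVec_le hQ heven

end CliqueInequality

section TightMatchings

variable [Fintype V] [DecidableEq V] (G : SimpleGraph V) [DecidableRel G.Adj]

def tightMatchings (Q : Finset V) : Set (Finset V × Finset (Sym2 V)) :=
  {q | IsTotalMatching G q.1 q.2 ∧ cliqueFunctional G Q (charVec q.1 q.2) = #Q / 2}

noncomputable def tightSpan (Q : Finset V) : Submodule ℝ ((V → ℝ) × (Sym2 V → ℝ)) :=
  Submodule.span ℝ ((fun q => charVec q.1 q.2) '' tightMatchings G Q)

variable {G} {Q : Finset V}

theorem charVec_mem_tightSpan {S : Finset V} {M : Finset (Sym2 V)}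
    (h : (S, M) ∈ tightMatchings G Q) : charVec S M ∈ tightSpan G Q :=
  Submodule.subset_span ⟨(S, M), h, rfl⟩

theorem IsPerfectMatchingOn.mem_tightMatchings {R S : Finset V} {M : Finset (Sym2 V)}
    (hM : IsPerfectMatchingOn G R M) (hT : IsTotalMatching G S M) (hSQ : S ⊆ Q) (hRQ : R ⊆ Q)
    (hcard : 2 * #S + #R = #Q) : (S, M) ∈ tightMatchings G Q := by
  refine ⟨hT, ?_⟩
  have hMQ : M ⊆ cliqueEdges G Q := fun e he =>
    mem_cliqueEdges.2 ⟨hT.1 he, fun v hv => hRQ (hM.2.1 e he v hv)⟩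
  have hMR := hM.2.2
  rw [cliqueFunctional_charVec, inter_eq_right.2 hSQ, inter_eq_right.2 hMQ,
    eq_div_iff two_ne_zero]
  exact_mod_cast (by omega : (#S + #M) * 2 = #Q)

theorem IsPerfectMatchingOn.mem_tightMatchings_singleton {a c : V} {M : Finset (Sym2 V)}
    (hM : IsPerfectMatchingOn G ((Q.erase a).erase c) M) (ha : a ∈ Q) (hc : c ∈ Q)
    (hac : a ≠ c) : (insert a ∅, M) ∈ tightMatchings G Q := by
  have haR : a ∉ (Q.erase a).erase c := fun h => (ne_of_mem_erase (mem_of_mem_erase h)) rfl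
  have hcard : #((Q.erase a).erase c) = #Q - 2 := by
    rw [card_erase_of_mem (mem_erase.2 ⟨hac.symm, hc⟩), card_erase_of_mem ha]
    omega
  have : 1 < #Q := one_lt_card.2 ⟨a, ha, c, hc, hac⟩
  refine hM.mem_tightMatchings (hM.1.insert_vertex (by simp)
    (fun e he hae => haR (hM.2.1 e he a hae))) (by simpa using ha)
    ((erase_subset _ _).trans (erase_subset _ _)) ?_
  rw [hcard, insert_empty, card_singleton]
  omega

theorem coordBasis_inl_mem_tightSpan_of_insert {S : Finset V} {M : Finset (Sym2 V)} {v : V}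
    (hq : (S, M) ∈ tightMatchings G Q) (hvQ : v ∉ Q) (hvS : v ∉ S)
    (hT : IsTotalMatching G (insert v S) M) : coordBasis V (.inl v) ∈ tightSpan G Q := by
  have hq' : (insert v S, M) ∈ tightMatchings G Q := by
    refine ⟨hT, ?_⟩
    rw [← hq.2, cliqueFunctional_charVec, cliqueFunctional_charVec, inter_insert_of_notMem hvQ]
  simpa [charVec_insert_vertex hvS] using
    sub_mem (charVec_mem_tightSpan hq') (charVec_mem_tightSpan hq)

theorem coordBasis_inr_mem_tightSpan_of_insert {S : Finset V} {M : Finset (Sym2 V)}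
    {e : Sym2 V} (hq : (S, M) ∈ tightMatchings G Q) (heQ : e ∉ cliqueEdges G Q) (heM : e ∉ M)
    (hT : IsTotalMatching G S (insert e M)) : coordBasis V (.inr e) ∈ tightSpan G Q := by
  have hq' : (S, insert e M) ∈ tightMatchings G Q := by
    refine ⟨hT, ?_⟩
    rw [← hq.2, cliqueFunctional_charVec, cliqueFunctional_charVec, inter_insert_of_notMem heQ]
  simpa [charVec_insert_edge S heM] using
    sub_mem (charVec_mem_tightSpan hq') (charVec_mem_tightSpan hq)

end TightMatchings

section Spanning

variable [Fintype V] [DecidableEq V] {G : SimpleGraph V} [DecidableRel G.Adj] {Q : Finset V}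
  (hQ : G.IsClique (Q : Set V)) (heven : Even #Q)
include hQ heven

theorem coordBasis_inl_sub_mem_tightSpan {a c : V} (ha : a ∈ Q) (hc : c ∈ Q) :
    coordBasis V (.inl a) - coordBasis V (.inl c) ∈ tightSpan G Q := by
  obtain rfl | hac := eq_or_ne a c
  · simp
  obtain ⟨M, hM⟩ := hQ.exists_isPerfectMatchingOn_erase_erase heven ha hc hac
  have hA := hM.mem_tightMatchings_singleton ha hc hac
  have hC := (erase_right_comm (s := Q) ▸ hM).mem_tightMatchings_singleton hc ha hac.symm
  have h := sub_mem (charVec_mem_tightSpan hA) (charVec_mem_tightSpan hC)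
  rwa [charVec_insert_vertex (notMem_empty a), charVec_insert_vertex (notMem_empty c),
    add_sub_add_left_eq_sub] at h

theorem coordBasis_inr_sub_inl_mem_tightSpan {a c : V} (hac : G.Adj a c) (ha : a ∈ Q)
    (hc : c ∈ Q) : coordBasis V (.inr s(a, c)) - coordBasis V (.inl a) ∈ tightSpan G Q := by
  obtain ⟨M, hM⟩ := hQ.exists_isPerfectMatchingOn_erase_erase heven ha hc hac.ne
  have hA := hM.mem_tightMatchings_singleton ha hc hac.ne
  have hP := hM.insert_edge hac (by simp) (by simp)
  rw [insert_erase (mem_erase.2 ⟨hac.ne.symm, hc⟩), insert_erase ha] at hP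
  have hacM : s(a, c) ∉ M := fun h => by simpa using hM.2.1 _ h a (Sym2.mem_mk_left a c)
  have h := sub_mem (charVec_mem_tightSpan (hP.mem_tightMatchings hP.1 (empty_subset _)
    subset_rfl (by simp))) (charVec_mem_tightSpan hA)
  rwa [charVec_insert_vertex (notMem_empty a), charVec_insert_edge _ hacM,
    add_sub_add_left_eq_sub] at h

theorem coordBasis_inl_mem_tightSpan_of_mem {a : V} (ha : a ∈ Q) :
    coordBasis V (.inl a) ∈ tightSpan G Q := by
  obtain ⟨P, hP⟩ := hQ.exists_isPerfectMatchingOn heven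
  have hPtight := charVec_mem_tightSpan
    (hP.mem_tightMatchings hP.1 (empty_subset _) subset_rfl (by simp))
  have hdiff : ∀ f ∈ P, coordBasis V (.inr f) - coordBasis V (.inl a) ∈ tightSpan G Q := by
    intro f hf
    induction f using Sym2.ind with
    | h c d =>
      have hc := hP.2.1 _ hf c (Sym2.mem_mk_left c d)
      have hd := hP.2.1 _ hf d (Sym2.mem_mk_right c d)
      simpa using add_mem (coordBasis_inr_sub_inl_mem_tightSpan hQ heven (hP.1.1 hf) hc hd)
        (coordBasis_inl_sub_mem_tightSpan hQ heven hc ha)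
  have hPcard : (#P : ℝ) ≠ 0 := by
    have := hP.2.2
    have := card_pos.2 ⟨a, ha⟩
    exact_mod_cast (by omega : #P ≠ 0)
  -- `#P • e_a = χ(P) - ∑_{f ∈ P} (e_f - e_a)`, and `#P = #Q / 2 ≠ 0`
  have hsum : (#P : ℝ) • coordBasis V (.inl a) =
      charVec ∅ P - ∑ f ∈ P, (coordBasis V (.inr f) - coordBasis V (.inl a)) := by
    rw [charVec_eq_sum, sum_empty, zero_add, sum_sub_distrib, sum_const, sub_sub_cancel,
      Nat.cast_smul_eq_nsmul]
  rw [← Submodule.smul_mem_iff _ hPcard, hsum]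
  exact sub_mem hPtight (sum_mem hdiff)

theorem coordBasis_inl_mem_tightSpan_of_notMem {v : V} (hv : v ∉ Q) :
    coordBasis V (.inl v) ∈ tightSpan G Q := by
  obtain ⟨P, hP⟩ := hQ.exists_isPerfectMatchingOn heven
  exact coordBasis_inl_mem_tightSpan_of_insert
    (hP.mem_tightMatchings hP.1 (empty_subset _) subset_rfl (by simp)) hv (notMem_empty v)
    (hP.1.insert_vertex (by simp) fun e he hve => hv (hP.2.1 e he v hve))

theorem coordBasis_inr_mem_tightSpan_of_notMem_of_notMem {x y : V} (hxy : G.Adj x y)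
    (hx : x ∉ Q) (hy : y ∉ Q) : coordBasis V (.inr s(x, y)) ∈ tightSpan G Q := by
  obtain ⟨P, hP⟩ := hQ.exists_isPerfectMatchingOn heven
  have hxyQ : ∀ v ∈ s(x, y), v ∉ Q := by
    simp only [Sym2.mem_iff]
    rintro v (rfl | rfl) <;> assumption
  exact coordBasis_inr_mem_tightSpan_of_insert
    (hP.mem_tightMatchings hP.1 (empty_subset _) subset_rfl (by simp))
    (fun h => hx ((mem_cliqueEdges.1 h).2 x (Sym2.mem_mk_left x y)))
    (fun h => hx (hP.2.1 _ h x (Sym2.mem_mk_left x y)))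
    (hP.1.insert_edge hxy (fun f hf v hv hvf => hxyQ v hv (hP.2.1 f hf v hvf)) (by simp))

theorem coordBasis_inr_mem_tightSpan_of_mem_of_notMem {c y : V} (hcy : G.Adj c y) (hc : c ∈ Q)
    (hy : y ∉ Q) : coordBasis V (.inr s(c, y)) ∈ tightSpan G Q := by
  have : 1 < #Q := by
    obtain ⟨k, hk⟩ := heven
    have := card_pos.2 ⟨c, hc⟩
    omega
  obtain ⟨a, ha, hac⟩ := exists_mem_ne this c
  obtain ⟨M, hM⟩ := hQ.exists_isPerfectMatchingOn_erase_erase heven ha hc hac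
  have hcyR : ∀ v ∈ s(c, y), v ∉ (Q.erase a).erase c := by
    simp only [Sym2.mem_iff]
    rintro v (rfl | rfl)
    · simp
    · exact fun h => hy (mem_of_mem_erase (mem_of_mem_erase h))
  refine coordBasis_inr_mem_tightSpan_of_insert (hM.mem_tightMatchings_singleton ha hc hac)
    (fun h => hy ((mem_cliqueEdges.1 h).2 y (Sym2.mem_mk_right c y)))
    (fun h => hcyR c (Sym2.mem_mk_left c y) (hM.2.1 _ h c (Sym2.mem_mk_left c y)))
    (hM.1.insert_vertex (by simp) (fun e he hae => ?_) |>.insert_edge hcy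
      (fun f hf v hv hvf => hcyR v hv (hM.2.1 f hf v hvf)) ?_)
  · exact ne_of_mem_erase (mem_of_mem_erase (hM.2.1 e he a hae)) rfl
  · simp only [insert_empty, mem_singleton, Sym2.mem_iff]
    rintro v rfl (rfl | rfl)
    exacts [hac rfl, hy ha]

theorem coordBasis_inr_mem_tightSpan {e : Sym2 V} (he : e ∈ G.edgeSet) :
    coordBasis V (.inr e) ∈ tightSpan G Q := by
  induction e using Sym2.ind with
  | h x y =>
    have hxy : G.Adj x y := he
    by_cases hx : x ∈ Q <;> by_cases hy : y ∈ Q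
    · simpa using add_mem (coordBasis_inr_sub_inl_mem_tightSpan hQ heven hxy hx hy)
        (coordBasis_inl_mem_tightSpan_of_mem hQ heven hx)
    · exact coordBasis_inr_mem_tightSpan_of_mem_of_notMem hQ heven hxy hx hy
    · rw [Sym2.eq_swap]
      exact coordBasis_inr_mem_tightSpan_of_mem_of_notMem hQ heven hxy.symm hy hx
    · exact coordBasis_inr_mem_tightSpan_of_notMem_of_notMem hQ heven hxy hx hy

theorem card_add_card_edgeFinset_le_finrank_tightSpan :
    Fintype.card V + #G.edgeFinset ≤ Module.finrank ℝ (tightSpan G Q) := by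
  let u : V ⊕ G.edgeFinset → (V → ℝ) × (Sym2 V → ℝ) :=
    fun α => coordBasis V (Sum.map id Subtype.val α)
  have hu : LinearIndependent ℝ u := (coordBasis V).linearIndependent.comp _
    (Sum.map_injective.2 ⟨Function.injective_id, Subtype.val_injective⟩)
  have hmem : ∀ α, u α ∈ tightSpan G Q := by
    rintro (v | ⟨e, he⟩)
    · by_cases hv : v ∈ Q
      exacts [coordBasis_inl_mem_tightSpan_of_mem hQ heven hv,
        coordBasis_inl_mem_tightSpan_of_notMem hQ heven hv]
    · exact coordBasis_inr_mem_tightSpan hQ heven (G.mem_edgeFinset.1 he)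
  calc Fintype.card V + #G.edgeFinset = Module.finrank ℝ (Submodule.span ℝ (Set.range u)) := by
        rw [finrank_span_eq_card hu, Fintype.card_sum, Fintype.card_coe]
    _ ≤ Module.finrank ℝ (tightSpan G Q) :=
        Submodule.finrank_mono (Submodule.span_le.2 (Set.range_subset_iff.2 hmem))

end Spanning

theorem even_clique_facet_general [Fintype V] [DecidableEq V]
    (G : SimpleGraph V) [DecidableRel G.Adj] (Q : Finset V) (h : ℕ)
    (heven : Even h) (hQ : G.IsClique ↑Q) (hcard : Q.card = h) :
    (∀ p ∈ totalMatchingPolytope G,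
      ∑ v ∈ Q, p.1 v + ∑ e ∈ G.edgeFinset.filter (fun e => ∀ v ∈ e, v ∈ Q), p.2 e
        ≤ (h : ℝ) / 2) ∧
    ∃ F : Finset (Finset V × Finset (Sym2 V)),
      F.card = Fintype.card V + G.edgeFinset.card ∧
      (∀ q ∈ F, IsTotalMatching G q.1 q.2 ∧
        ∑ v ∈ Q, (charVec q.1 q.2).1 v +
          ∑ e ∈ G.edgeFinset.filter (fun e => ∀ v ∈ e, v ∈ Q), (charVec q.1 q.2).2 e
            = (h : ℝ) / 2) ∧
      AffineIndependent ℝ (fun q : F => charVec q.1.1 q.1.2) := by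
  subst hcard
  refine ⟨fun p hp => cliqueFunctional_le_of_mem_totalMatchingPolytope hQ heven hp, ?_⟩
  obtain ⟨F, hF, hFcard, hFli⟩ := exists_finset_subset_card_eq_linearIndependent
    (Set.toFinite (tightMatchings G Q)) (fun q => charVec q.1 q.2)
    (card_add_card_edgeFinset_le_finrank_tightSpan hQ heven)
  exact ⟨F, hFcard, fun q hq => hF hq, hFli.affineIndependent⟩

/-- For a clique `Q` of `G` of even cardinality `h ≥ 2`, the even-clique inequality
`∑_{v ∈ V(K_h)} x_v + ∑_{e ∈ E(K_h)} y_e ≤ h/2` is valid for the total matching polytope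
and facet-defining: there exist `n + m` affinely independent characteristic vectors of
total matchings satisfying it with equality. -/
theorem even_clique_facet [Fintype V] [DecidableEq V]
    (G : SimpleGraph V) [DecidableRel G.Adj] (Q : Finset V) (h : ℕ)
    (hh : 2 ≤ h) (heven : Even h) (hQ : G.IsClique ↑Q) (hcard : Q.card = h) :
    (∀ p ∈ totalMatchingPolytope G,
      ∑ v ∈ Q, p.1 v + ∑ e ∈ G.edgeFinset.filter (fun e => ∀ v ∈ e, v ∈ Q), p.2 e
        ≤ (h : ℝ) / 2) ∧
    ∃ F : Finset (Finset V × Finset (Sym2 V)),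
      F.card = Fintype.card V + G.edgeFinset.card ∧
      (∀ q ∈ F, IsTotalMatching G q.1 q.2 ∧
        ∑ v ∈ Q, (charVec q.1 q.2).1 v +
          ∑ e ∈ G.edgeFinset.filter (fun e => ∀ v ∈ e, v ∈ Q), (charVec q.1 q.2).2 e
            = (h : ℝ) / 2) ∧
      AffineIndependent ℝ (fun q : F => charVec q.1.1 q.1.2) :=
  even_clique_facet_general G Q h heven hQ hcard
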